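/- Ekeland's variational principle: let X be a complete metric space, φ : X → ℝ ∪ {+∞} lower semicontinuous and bounded from below, x̄ ∈ dom φ, and ε > 0. Then there exists x̂ ∈ X such that φ(x̂) ≤ φ(x̄) and φ(x) + ε·d(x, x̂) ≥ φ(x̂) for all x ∈ X. -/

import Mathlib

open Filter Metric Set Topology

/-!
Write `y ≽ z` when `f z + ε d(z, y) ≤ f y`; this is a partial order whose down-sets
`S(y) = {z | y ≽ z}` are closed by lower semicontinuity. Choosing each `x (n + 1)` in `S(x n)`
with `f (x (n + 1))` within `ε / (n + 1)` of the infimum of `f` on `S(x n)` traps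
`S(x (n + 1))` in a ball of radius `1 / (n + 1)`, so the nested sets shrink to a single point
`x̂`, which is `≽`-minimal: that is the conclusion. For `φ` with values in `ℝ ∪ {+∞}` one
runs this on the closed sublevel set `{φ ≤ φ x₀}`, where `φ` is real-valued; points outside
it satisfy the inequality trivially.
-/

theorem exists_mem_forall_le_add {α : Type*} {s : Set α} {f : α → ℝ} (hs : s.Nonempty)
    (hf : BddBelow (f '' s)) {δ : ℝ} (hδ : 0 < δ) : ∃ z ∈ s, ∀ w ∈ s, f z ≤ f w + δ := by
  obtain ⟨_, ⟨z, hz, rfl⟩, hlt⟩ :=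
    exists_lt_of_csInf_lt (hs.image f) (lt_add_of_pos_right (sInf (f '' s)) hδ)
  exact ⟨z, hz, fun w hw => hlt.le.trans (by gcongr; exact csInf_le hf (mem_image_of_mem f hw))⟩

theorem LowerSemicontinuous.toReal_comp {α : Type*} [TopologicalSpace α] {f : α → EReal}
    (hf : LowerSemicontinuous f) (hbot : ∀ x, f x ≠ ⊥) (htop : ∀ x, f x ≠ ⊤) :
    LowerSemicontinuous fun x => (f x).toReal := by
  intro x y hy
  have hcoe : ∀ x, ((f x).toReal : EReal) = f x := fun x => EReal.coe_toReal (htop x) (hbot x)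
  filter_upwards [hf x y (show (y : EReal) < f x by rw [← hcoe x]; exact_mod_cast hy)] with x' hx'
  rw [← hcoe x'] at hx'
  exact_mod_cast hx'

theorem Metric.exists_iInter_eq_singleton_of_antitone {X : Type*} [MetricSpace X] [CompleteSpace X]
    {s : ℕ → Set X} {c : ℕ → X} {r : ℕ → ℝ} (hclosed : ∀ n, IsClosed (s n)) (hanti : Antitone s)
    (hne : ∀ n, (s n).Nonempty) (hball : ∀ n, s n ⊆ closedBall (c n) (r n))
    (hr : Tendsto r atTop (𝓝 0)) : ∃ x, ⋂ n, s n = {x} := by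
  have hdist : ∀ n, ∀ x ∈ s n, ∀ y ∈ s n, dist x y ≤ 2 * r n := fun n x hx y hy =>
    calc dist x y ≤ dist x (c n) + dist y (c n) := dist_triangle_right x y (c n)
      _ ≤ 2 * r n := by linarith [mem_closedBall.1 (hball n hx), mem_closedBall.1 (hball n hy)]
  have hdiam : Tendsto (fun n => diam (s n)) atTop (𝓝 0) := by
    refine squeeze_zero (fun n => diam_nonneg) (fun n => ?_) (by simpa using hr.const_mul 2)
    obtain ⟨x, hx⟩ := hne n
    exact diam_le_of_forall_dist_le (by simpa using hdist n x hx x hx) (hdist n)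
  obtain ⟨x, hx⟩ := nonempty_iInter_of_nonempty_biInter hclosed
    (fun n => isBounded_closedBall.subset (hball n))
    (fun N => (hne N).mono (subset_iInter₂ fun n hn => hanti hn)) hdiam
  refine ⟨x, eq_singleton_iff_unique_mem.2 ⟨hx, fun y hy => dist_le_zero.1 ?_⟩⟩
  rw [mem_iInter] at hx hy
  exact le_of_tendsto_of_tendsto' tendsto_const_nhds hdiam
    fun n => dist_le_diam_of_mem (isBounded_closedBall.subset (hball n)) (hy n) (hx n)

section Ekeland

variable {X : Type*} [MetricSpace X] {f : X → ℝ} {ε : ℝ}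

def ekelandSet (f : X → ℝ) (ε : ℝ) (y : X) : Set X := {z | f z + ε * dist z y ≤ f y}

theorem self_mem_ekelandSet (y : X) : y ∈ ekelandSet f ε y := by
  simp [ekelandSet]

theorem ekelandSet_subset (hε : 0 ≤ ε) {y z : X} (hz : z ∈ ekelandSet f ε y) :
    ekelandSet f ε z ⊆ ekelandSet f ε y := fun w hw => by
  have := mul_le_mul_of_nonneg_left (dist_triangle w z y) hε
  simp only [ekelandSet, mem_ofPred_eq] at hz hw ⊢
  linarith

theorem isClosed_ekelandSet (hf : LowerSemicontinuous f) (y : X) :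
    IsClosed (ekelandSet f ε y) :=
  (hf.add (continuous_const.mul (continuous_id.dist continuous_const)).lowerSemicontinuous
    |>.isClosed_preimage (f y))

theorem ekelandSet_subset_closedBall (hε : 0 < ε) {y : X} {r : ℝ}
    (hy : ∀ w ∈ ekelandSet f ε y, f y ≤ f w + ε * r) : ekelandSet f ε y ⊆ closedBall y r :=
  fun w hw => by
    have hw' : f w + ε * dist w y ≤ f y := hw
    exact le_of_mul_le_mul_left (by linarith [hy w hw]) hε

theorem exists_ekelandSet_subset_closedBall (hbdd : BddBelow (range f)) (hε : 0 < ε) (y : X)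
    {r : ℝ} (hr : 0 < r) : ∃ z ∈ ekelandSet f ε y, ekelandSet f ε z ⊆ closedBall z r := by
  obtain ⟨z, hz, hmin⟩ := exists_mem_forall_le_add ⟨y, self_mem_ekelandSet y⟩
    (hbdd.mono (image_subset_range _ _)) (mul_pos hε hr)
  exact ⟨z, hz, ekelandSet_subset_closedBall hε fun w hw =>
    hmin w (ekelandSet_subset hε.le hz hw)⟩

theorem ekeland_variational_principle_real [CompleteSpace X] (hf : LowerSemicontinuous f)
    (hbdd : BddBelow (range f)) (x₀ : X) (hε : 0 < ε) :
    ∃ xh, f xh ≤ f x₀ ∧ ∀ x, f xh ≤ f x + ε * dist x xh := by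
  choose next hnext hball using fun (n : ℕ) (y : X) =>
    exists_ekelandSet_subset_closedBall hbdd hε y (Nat.one_div_pos_of_nat (n := n))
  -- `x (n + 1) = next n (x n)`
  let x : ℕ → X := fun n => Nat.rec (motive := fun _ => X) x₀ next n
  let s : ℕ → Set X := fun n => ekelandSet f ε (x (n + 1))
  have hanti : Antitone s :=
    antitone_nat_of_succ_le fun n => ekelandSet_subset hε.le (hnext _ _)
  obtain ⟨xh, hxh⟩ := exists_iInter_eq_singleton_of_antitone
    (fun n => isClosed_ekelandSet hf _) hanti (fun n => ⟨_, self_mem_ekelandSet _⟩)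
    (fun n => hball _ _) tendsto_one_div_add_atTop_nhds_zero_nat
  have hmem : ∀ n, xh ∈ s n := mem_iInter.1 (hxh ▸ mem_singleton xh)
  refine ⟨xh, ?_, fun z => ?_⟩
  · have h₀ : f xh + ε * dist xh x₀ ≤ f x₀ := ekelandSet_subset hε.le (hnext 0 x₀) (hmem 0)
    linarith [mul_nonneg hε.le (dist_nonneg (x := xh) (y := x₀))]
  · by_contra! hlt
    have hz : z ∈ ⋂ n, s n := mem_iInter.2 fun n => ekelandSet_subset hε.le (hmem n) hlt.le
    rw [hxh, mem_singleton_iff] at hz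
    subst hz
    simp at hlt

end Ekeland

theorem ekeland_variational_principle_general {X : Type*} [MetricSpace X] [CompleteSpace X]
    (φ : X → EReal) (hlsc : LowerSemicontinuous φ)
    (hbdd : ∃ c : ℝ, ∀ x, (c : EReal) ≤ φ x)
    (x₀ : X) (hdom : φ x₀ ≠ ⊤) (ε : ℝ) (hε : 0 < ε) :
    ∃ xh : X, φ xh ≤ φ x₀ ∧
      ∀ x : X, φ xh ≤ φ x + ((ε * dist x xh : ℝ) : EReal) := by
  obtain ⟨c, hc⟩ := hbdd
  let S : Set X := φ ⁻¹' Iic (φ x₀)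
  have : CompleteSpace S := (hlsc.isClosed_preimage (φ x₀)).completeSpace_coe
  have hbot (x : S) : φ x ≠ ⊥ := ne_bot_of_le_ne_bot (EReal.coe_ne_bot c) (hc x)
  have htop (x : S) : φ x ≠ ⊤ := ne_top_of_le_ne_top hdom x.2
  have hcoe (x : S) : ((φ x).toReal : EReal) = φ x := EReal.coe_toReal (htop x) (hbot x)
  obtain ⟨xh, -, hmin⟩ := ekeland_variational_principle_real
    ((hlsc.comp continuous_subtype_val).toReal_comp hbot htop)
    ⟨c, forall_mem_range.2 fun x => EReal.coe_le_coe_iff.1 ((hcoe x).symm ▸ hc x)⟩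
    ⟨x₀, le_refl (φ x₀)⟩ hε
  refine ⟨xh, xh.2, fun x => ?_⟩
  by_cases hx : φ x ≤ φ x₀
  · rw [← hcoe xh, ← hcoe ⟨x, hx⟩, ← EReal.coe_add, EReal.coe_le_coe_iff]
    exact hmin ⟨x, hx⟩
  · calc φ xh ≤ φ x := xh.2.trans (not_le.1 hx).le
      _ ≤ φ x + ((ε * dist x xh : ℝ) : EReal) :=
        le_add_of_nonneg_right (EReal.coe_nonneg.2 (mul_nonneg hε.le dist_nonneg))

/-- Ekeland's variational principle (Lemma 2.1): if `X` is a complete metric space,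
`φ : X → ℝ ∪ {+∞}` is lower semicontinuous and bounded from below, `x₀ ∈ dom φ`,
and `ε > 0`, then there exists `x̂ ∈ X` with `φ(x̂) ≤ φ(x₀)` and
`φ(x) + ε d(x, x̂) ≥ φ(x̂)` for all `x ∈ X`. -/
theorem ekeland_variational_principle {X : Type*} [MetricSpace X] [CompleteSpace X]
    (φ : X → EReal) (hlsc : LowerSemicontinuous φ) (hbot : ∀ x, φ x ≠ ⊥)
    (hbdd : ∃ c : ℝ, ∀ x, (c : EReal) ≤ φ x)
    (x₀ : X) (hdom : φ x₀ ≠ ⊤) (ε : ℝ) (hε : 0 < ε) :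
    ∃ xh : X, φ xh ≤ φ x₀ ∧
      ∀ x : X, φ xh ≤ φ x + ((ε * dist x xh : ℝ) : EReal) :=
  ekeland_variational_principle_general φ hlsc hbdd x₀ hdom ε hε
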